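/- Let q, a, b, c ∈ ℂ generic (q ≠ 0, qⁿ ≠ 1 for nonzero n, relevant q-shifted factorials nonzero). The continuous dual q-Hahn polynomial admits two terminating representations which agree: (ab, bc; q)_n b^{−n} ₃φ₂(q^{−n}, bz, b z^{−1}; ab, bc; q, q) = (ab, ac; q)_n a^{−n} ₃φ₂(q^{−n}, az, a z^{−1}; ab, ac; q, q) for all z ≠ 0. -/

import Mathlib

open Finset

/-- q-shifted factorial (a;q)_k -/
noncomputable def qPoch (a q : ℂ) (k : ℕ) : ℂ := ∏ i ∈ range k, (1 - a * q ^ i)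

/-!
Expanded in the basis `(az, a/z; q)_k`, on which multiplication by `x = z + z⁻¹` acts
tridiagonally, the normalized sum `P_n = a⁻ⁿ (ab, ac; q)_n ₃φ₂(q⁻ⁿ, az, a/z; ab, ac; q, q)`
satisfies, coefficient by coefficient, the three-term recurrence
`P_{n+2} = (x - B_n) P_{n+1} - C_n P_n`. The coefficients `B_n`, `C_n` and the initial values
`P_0 = 1`, `P_1 = x - (a + b + c) + abc` are symmetric in `a, b, c`, hence so is every `P_n`.
-/

section qPoch

@[simp]
theorem qPoch_zero (a q : ℂ) : qPoch a q 0 = 1 := prod_range_zero _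

theorem qPoch_succ (a q : ℂ) (k : ℕ) : qPoch a q (k + 1) = qPoch a q k * (1 - a * q ^ k) :=
  prod_range_succ _ _

variable {a q : ℂ}

theorem qPoch_ne_zero_iff {n : ℕ} : qPoch a q n ≠ 0 ↔ ∀ i < n, 1 - a * q ^ i ≠ 0 := by
  simp [qPoch, prod_ne_zero_iff]

theorem qPoch_ne_zero_of_le {m n : ℕ} (h : qPoch a q n ≠ 0) (hmn : m ≤ n) :
    qPoch a q m ≠ 0 :=
  qPoch_ne_zero_iff.2 fun i hi => qPoch_ne_zero_iff.1 h i (hi.trans_le hmn)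

theorem qPoch_self_ne_zero (hq : ∀ i : ℕ, q ^ (i + 1) ≠ 1) (n : ℕ) : qPoch q q n ≠ 0 :=
  qPoch_ne_zero_iff.2 fun i _ => by rw [← pow_succ']; exact sub_ne_zero.2 (hq i).symm

theorem qPoch_inv_pow_eq_zero (hq : q ≠ 0) {n k : ℕ} (h : n < k) : qPoch (q ^ n)⁻¹ q k = 0 :=
  prod_eq_zero (mem_range.2 h) (by rw [inv_mul_cancel₀ (pow_ne_zero n hq), sub_self])

theorem qPoch_inv_pow_succ_succ (hq : q ≠ 0) (n k : ℕ) :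
    qPoch (q ^ (n + 1))⁻¹ q (k + 1) = (1 - (q ^ (n + 1))⁻¹) * qPoch (q ^ n)⁻¹ q k := by
  rw [qPoch, prod_range_succ', pow_zero, mul_one, mul_comm]
  congr 1
  refine prod_congr rfl fun i _ => ?_
  field_simp
  ring

end qPoch

theorem sum_range_recurrence_of_tridiagonal {R : Type*} [CommRing R] {x B C : R}
    {φ α β u v w : ℕ → R} {N : ℕ} (hφ : ∀ k, x * φ k = α k * φ k + β k * φ (k + 1))
    (hv : v N = 0) (h₀ : u 0 = (α 0 - B) * v 0 - C * w 0)
    (hsucc : ∀ k < N,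
      u (k + 1) = (α (k + 1) - B) * v (k + 1) + β k * v k - C * w (k + 1)) :
    ∑ k ∈ range (N + 1), u k * φ k =
      (x - B) * ∑ k ∈ range (N + 1), v k * φ k - C * ∑ k ∈ range (N + 1), w k * φ k := by
  have hx : x * ∑ k ∈ range (N + 1), v k * φ k =
      α 0 * v 0 * φ 0
        + ∑ k ∈ range N, (α (k + 1) * v (k + 1) + β k * v k) * φ (k + 1) := by
    calc x * ∑ k ∈ range (N + 1), v k * φ k
        = ∑ k ∈ range (N + 1), (α k * v k * φ k + β k * v k * φ (k + 1)) := by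
          rw [mul_sum]
          exact sum_congr rfl fun k _ => by linear_combination v k * hφ k
      _ = _ := by
          rw [sum_add_distrib, sum_range_succ' (fun k => α k * v k * φ k),
            sum_range_succ (fun k => β k * v k * φ (k + 1)), hv]
          simp only [add_mul, sum_add_distrib]
          ring
  have hu : ∀ k ∈ range N, u (k + 1) * φ (k + 1) =
      (α (k + 1) * v (k + 1) + β k * v k) * φ (k + 1) - B * (v (k + 1) * φ (k + 1))
        - C * (w (k + 1) * φ (k + 1)) := fun k hk => by
    rw [hsucc k (mem_range.1 hk)]
    ring
  rw [sub_mul, hx, sum_range_succ' (fun k => u k * φ k), sum_range_succ' (fun k => v k * φ k),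
    sum_range_succ' (fun k => w k * φ k), sum_congr rfl hu, sum_sub_distrib, sum_sub_distrib,
    ← mul_sum, ← mul_sum, h₀]
  ring

namespace ContinuousDualQHahn

noncomputable def basis (q a z : ℂ) (k : ℕ) : ℂ := qPoch (a * z) q k * qPoch (a * z⁻¹) q k

noncomputable def coeff (q a b c : ℂ) (n k : ℕ) : ℂ :=
  qPoch (a * b) q n * qPoch (a * c) q n / a ^ n *
    (qPoch (q ^ n)⁻¹ q k * q ^ k / (qPoch q q k * qPoch (a * b) q k * qPoch (a * c) q k))

noncomputable def poly (q a b c z : ℂ) (n : ℕ) : ℂ :=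
  ∑ k ∈ range (n + 1), coeff q a b c n k * basis q a z k

-- The recurrence coefficients of Koekoek–Lesky–Swarttouw (14.3.4), renormalized to `P_n`.
def recB (q a b c : ℂ) (n : ℕ) : ℂ :=
  (a + b + c) * q ^ (n + 1) + a * b * c * q ^ n - a * b * c * q ^ (2 * n + 1)
    - a * b * c * q ^ (2 * n + 2)

def recC (q a b c : ℂ) (n : ℕ) : ℂ :=
  (1 - q ^ (n + 1)) * (1 - a * b * q ^ n) * (1 - a * c * q ^ n) * (1 - b * c * q ^ n)

variable {q a b c z : ℂ}

theorem recB_swap (n : ℕ) : recB q b a c n = recB q a b c n := by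
  simp only [recB]; ring

theorem recC_swap (n : ℕ) : recC q b a c n = recC q a b c n := by
  simp only [recC]; ring

theorem add_inv_mul_basis (hq : q ≠ 0) (ha : a ≠ 0) (hz : z ≠ 0) (k : ℕ) :
    (z + z⁻¹) * basis q a z k =
      (1 + a ^ 2 * (q ^ k) ^ 2) / (a * q ^ k) * basis q a z k
        + -(a * q ^ k)⁻¹ * basis q a z (k + 1) := by
  simp only [basis, qPoch_succ]
  field_simp
  ring

theorem coeff_eq_zero (hq : q ≠ 0) {n k : ℕ} (h : n < k) : coeff q a b c n k = 0 := by
  simp [coeff, qPoch_inv_pow_eq_zero hq h]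

theorem poly_eq_sum_range (hq : q ≠ 0) {n N : ℕ} (h : n + 1 ≤ N) :
    poly q a b c z n = ∑ k ∈ range N, coeff q a b c n k * basis q a z k :=
  sum_subset (range_subset_range.2 h) fun k _ hk => by
    rw [coeff_eq_zero hq (by simpa using hk), zero_mul]

theorem coeff_add_two_zero (ha : a ≠ 0) (n : ℕ) :
    coeff q a b c (n + 2) 0 =
      ((1 + a ^ 2 * (q ^ 0) ^ 2) / (a * q ^ 0) - recB q a b c n) * coeff q a b c (n + 1) 0
        - recC q a b c n * coeff q a b c n 0 := by
  simp only [coeff, recB, recC, qPoch_zero, qPoch_succ]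
  field_simp
  ring

theorem coeff_add_two_succ (hq : q ≠ 0) (ha : a ≠ 0) {n k : ℕ} (hk : k < n + 2)
    (hqq : qPoch q q (n + 2) ≠ 0) (hab : qPoch (a * b) q (n + 2) ≠ 0)
    (hac : qPoch (a * c) q (n + 2) ≠ 0) :
    coeff q a b c (n + 2) (k + 1) =
      ((1 + a ^ 2 * (q ^ (k + 1)) ^ 2) / (a * q ^ (k + 1)) - recB q a b c n)
          * coeff q a b c (n + 1) (k + 1)
        + -(a * q ^ k)⁻¹ * coeff q a b c (n + 1) k
        - recC q a b c n * coeff q a b c n (k + 1) := by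
  have hqn : q ^ (n + 1) ≠ 1 := fun h =>
    qPoch_ne_zero_iff.1 hqq n (by omega) (by rw [← pow_succ', h, sub_self])
  have hqn' : q ^ n * q - 1 ≠ 0 := sub_ne_zero.2 (by rwa [← pow_succ])
  have hinv : 1 - (q ^ (n + 1))⁻¹ ≠ 0 := sub_ne_zero.2 fun h => hqn (inv_eq_one.1 h.symm)
  have hqk : qPoch q q k ≠ 0 := qPoch_ne_zero_of_le hqq hk.le
  have habk : qPoch (a * b) q k ≠ 0 := qPoch_ne_zero_of_le hab hk.le
  have hack : qPoch (a * c) q k ≠ 0 := qPoch_ne_zero_of_le hac hk.le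
  have hK : q ^ k ≠ 0 := pow_ne_zero k hq
  have hM : q ^ n ≠ 0 := pow_ne_zero n hq
  have h1 : 1 - q * q ^ k ≠ 0 := qPoch_ne_zero_iff.1 hqq k hk
  have h2 : 1 - a * b * q ^ k ≠ 0 := qPoch_ne_zero_iff.1 hab k hk
  have h3 : 1 - a * c * q ^ k ≠ 0 := qPoch_ne_zero_iff.1 hac k hk
  have hshift : qPoch (q ^ n)⁻¹ q (k + 1) =
      qPoch (q ^ (n + 1))⁻¹ q k * (1 - (q ^ (n + 1))⁻¹ * q ^ k)
      * (1 - (q ^ (n + 1))⁻¹ * q ^ (k + 1)) / (1 - (q ^ (n + 1))⁻¹) := by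
    rw [eq_div_iff hinv, mul_comm, ← qPoch_inv_pow_succ_succ hq, qPoch_succ, qPoch_succ]
  simp only [coeff, recB, recC]
  rw [hshift, qPoch_inv_pow_succ_succ hq, qPoch_succ (q ^ (n + 1))⁻¹, qPoch_succ q q k,
    qPoch_succ (a * b) q k, qPoch_succ (a * c) q k, qPoch_succ (a * b) q (n + 1),
    qPoch_succ (a * b) q n, qPoch_succ (a * c) q (n + 1), qPoch_succ (a * c) q n]
  simp only [pow_succ, pow_add, two_mul]
  generalize qPoch (q ^ n * q)⁻¹ q k = L
  generalize q ^ k = K at *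
  generalize q ^ n = M at *
  field_simp
  ring

theorem poly_zero : poly q a b c z 0 = 1 := by
  simp [poly, coeff, basis]

theorem poly_one (hq : q ≠ 0) (ha : a ≠ 0) (hz : z ≠ 0) (hqq : qPoch q q 1 ≠ 0)
    (hab : qPoch (a * b) q 1 ≠ 0) (hac : qPoch (a * c) q 1 ≠ 0) :
    poly q a b c z 1 = z + z⁻¹ - (a + b + c) + a * b * c := by
  simp only [qPoch, prod_range_one, pow_zero, mul_one] at hqq hab hac
  simp only [poly, coeff, basis, qPoch, sum_range_succ, sum_range_zero, prod_range_succ,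
    prod_range_zero, pow_zero, pow_one, mul_one, one_mul, zero_add]
  field_simp
  ring

theorem poly_add_two (hq : q ≠ 0) (ha : a ≠ 0) (hz : z ≠ 0) {n : ℕ}
    (hqq : qPoch q q (n + 2) ≠ 0) (hab : qPoch (a * b) q (n + 2) ≠ 0)
    (hac : qPoch (a * c) q (n + 2) ≠ 0) :
    poly q a b c z (n + 2) =
      (z + z⁻¹ - recB q a b c n) * poly q a b c z (n + 1)
        - recC q a b c n * poly q a b c z n := by
  rw [poly_eq_sum_range hq (show n + 1 + 1 ≤ n + 2 + 1 by omega),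
    poly_eq_sum_range hq (show n + 1 ≤ n + 2 + 1 by omega)]
  exact sum_range_recurrence_of_tridiagonal (add_inv_mul_basis hq ha hz)
    (coeff_eq_zero hq (by omega)) (coeff_add_two_zero ha n)
    fun k hk => coeff_add_two_succ hq ha hk hqq hab hac

theorem poly_swap (hq : q ≠ 0) (ha : a ≠ 0) (hb : b ≠ 0) (hz : z ≠ 0) {n : ℕ}
    (hqq : qPoch q q n ≠ 0) (hab : qPoch (a * b) q n ≠ 0) (hac : qPoch (a * c) q n ≠ 0)
    (hbc : qPoch (b * c) q n ≠ 0) :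
    poly q b a c z n = poly q a b c z n := by
  rw [mul_comm a b] at hab
  induction n using Nat.twoStepInduction with
  | zero => rw [poly_zero, poly_zero]
  | one =>
    rw [poly_one hq hb hz hqq hab hbc, poly_one hq ha hz hqq (by rwa [mul_comm]) hac]
    ring
  | more n ih₀ ih₁ =>
    rw [poly_add_two hq hb hz hqq hab hbc, poly_add_two hq ha hz hqq (by rwa [mul_comm]) hac,
      recB_swap, recC_swap,
      ih₀ (qPoch_ne_zero_of_le hqq (by omega)) (qPoch_ne_zero_of_le hab (by omega))
        (qPoch_ne_zero_of_le hac (by omega)) (qPoch_ne_zero_of_le hbc (by omega)),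
      ih₁ (qPoch_ne_zero_of_le hqq (by omega)) (qPoch_ne_zero_of_le hab (by omega))
        (qPoch_ne_zero_of_le hac (by omega)) (qPoch_ne_zero_of_le hbc (by omega))]

theorem poly_eq_sum (q a b c z : ℂ) (n : ℕ) :
    poly q a b c z n = qPoch (a * b) q n * qPoch (a * c) q n * a⁻¹ ^ n *
      ∑ k ∈ range (n + 1),
        qPoch (q ^ n)⁻¹ q k * qPoch (a * z) q k * qPoch (a * z⁻¹) q k /
          (qPoch q q k * qPoch (a * b) q k * qPoch (a * c) q k) * q ^ k := by
  rw [poly, mul_sum]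
  refine sum_congr rfl fun k _ => ?_
  simp only [coeff, basis, inv_pow]
  ring

end ContinuousDualQHahn

theorem cdqHahn_symmetry (q a b c : ℂ)
    (hq : q ≠ 0) (hq1 : ∀ n : ℤ, n ≠ 0 → q ^ n ≠ 1)
    (ha : a ≠ 0) (hb : b ≠ 0) (n : ℕ)
    (hab : qPoch (a * b) q n ≠ 0) (hbc : qPoch (b * c) q n ≠ 0)
    (hac : qPoch (a * c) q n ≠ 0)
    (z : ℂ) (hz : z ≠ 0) :
    qPoch (a * b) q n * qPoch (b * c) q n * (b⁻¹) ^ n *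
      ∑ k ∈ range (n + 1),
        qPoch (q ^ (-(n : ℤ))) q k * qPoch (b * z) q k * qPoch (b * z⁻¹) q k /
          (qPoch q q k * qPoch (a * b) q k * qPoch (b * c) q k) * q ^ k
    = qPoch (a * b) q n * qPoch (a * c) q n * (a⁻¹) ^ n *
      ∑ k ∈ range (n + 1),
        qPoch (q ^ (-(n : ℤ))) q k * qPoch (a * z) q k * qPoch (a * z⁻¹) q k /
          (qPoch q q k * qPoch (a * b) q k * qPoch (a * c) q k) * q ^ k := by
  have hqq : qPoch q q n ≠ 0 := qPoch_self_ne_zero (fun i => by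
    exact_mod_cast hq1 (i + 1 : ℕ) (by omega)) n
  have hswap := ContinuousDualQHahn.poly_swap hq ha hb hz hqq hab hac hbc
  rw [ContinuousDualQHahn.poly_eq_sum, ContinuousDualQHahn.poly_eq_sum, mul_comm b a]
    at hswap
  rwa [zpow_neg, zpow_natCast]
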